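/- Bayes-optimal exploration eventually stops: In the environment class {ν_i : i ∈ ℕ ∪ {∞}} with prior w(ν_∞) = 1/2, w(ν_i) = 1/(2(i+1)(i+2)), and discount factor γ = 0.9, consider a history h_{<n} (n > 100) in which action 1 was taken at t = 100 yielding reward 0 and action 0 was taken at all other timesteps up to n−1. Then the posterior satisfies w(ν_∞ | h_{<n}) = 102/103 and w(ν_i | h_{<n}) = (204/103)·(1/(2(i+1)(i+2))) for i > 100, and for any S ∋ 100 consistent with this history, the posterior Bayes value of exploring once more satisfies ∑_{i ∈ ℕ∪{∞}} w(ν_i | h_{<n})·V^{π_{S∪{n}}}_{ν_i}(h_{<n}) ≤ (102/103)·(0.5·0.9) + 1/103 < 0.5 = ∑_{i ∈ ℕ∪{∞}} w(ν_i | h_{<n})·V^{π_S}_{ν_i}(h_{<n}); hence taking action 1 at time n is Bayes-worse than never exploring again. -/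

import Mathlib

/-!
The history rules out every `ν_i` with `i ≤ 100` and is uninformative about the rest, so the
posterior is the prior conditioned on `{ν_i : i > 100} ∪ {ν_∞}`; the prior tail
`∑_{i>100} w(ν_i) = 1/204` telescopes, giving normalizer `103/204`. Every surviving
environment pays `1/2` per step to the non-exploring policy. Exploring at time `n` costs the
step's `1/2` in `ν_∞` (value `γ/2`), while in the other environments the value is at most `1`,
which only carries posterior mass `1/103`.
-/

open scoped Classical

namespace BayesExplore

/-- In environment `ν_i` (where `i = some j` for `j ∈ ℕ` and `i = none` stands for `ν_∞`),
the arm `1` is "active" at time `s` iff `i = some j` with `j ≤ s`. -/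
def active (i : Option ℕ) (s : ℕ) : Prop := ∃ j : ℕ, i = some j ∧ j ≤ s

/-- The reward received at time `t` by the policy `π_S` in the deterministic
environment `ν_i`. -/
noncomputable def rew (S : Set ℕ) (i : Option ℕ) (t : ℕ) : ℝ :=
  if ∃ s ∈ S, s < t ∧ active i s then 1
  else if t ∈ S then (if active i t then 1 else 0)
  else 1 / 2

/-- Discounted value from time `n`: `V = (1-γ) ∑_{k≥0} γ^k r_{n+k}`. -/
noncomputable def valS (γ : ℝ) (S : Set ℕ) (i : Option ℕ) (n : ℕ) : ℝ :=
  (1 - γ) * ∑' k : ℕ, γ ^ k * rew S i (n + k)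

/-- The prior: `w(ν_∞) = 1/2` and `w(ν_i) = 1/(2(i+1)(i+2))`. -/
noncomputable def w0 : Option ℕ → ℝ
  | none => 1 / 2
  | some i => 1 / (2 * ((i : ℝ) + 1) * ((i : ℝ) + 2))

/-- The reward environment `ν_i` produces at time `t` on action `a` (`a = true` is
action 1): action 0 yields `1/2`; action 1 yields `1` if `t ≥ i` and `0` otherwise. -/
noncomputable def envRew (i : Option ℕ) (a : Bool) (t : ℕ) : ℝ :=
  if a then (if active i t then 1 else 0) else 1 / 2

/-- Likelihood of the history `h_{<n}` in which action 1 was taken at `t = 100` yielding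
reward 0 and action 0 was taken at all other timesteps `t < n` (deterministic
environments: 1 if consistent, 0 otherwise). -/
noncomputable def lik (i : Option ℕ) (n : ℕ) : ℝ :=
  if ∀ t < n, envRew i (decide (t = 100)) t = (if t = 100 then 0 else 1 / 2) then 1 else 0

/-- Posterior weight of `ν_i` by Bayes' rule after the history `h_{<n}`. -/
noncomputable def postw (n : ℕ) (i : Option ℕ) : ℝ :=
  w0 i * lik i n / ∑' j : Option ℕ, w0 j * lik j n

open Filter Topology

theorem hasSum_option {α M : Type*} [AddCommMonoid M] [TopologicalSpace M] [ContinuousAdd M]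
    {f : Option α → M} {a : M} (h : HasSum (fun a => f (some a)) a) : HasSum f (f none + a) := by
  have h_some : HasSum (fun i => Option.elim i 0 (f ∘ some)) a :=
    (Option.some_injective α).hasSum_iff (by rintro (_ | j) hj <;> simp_all) |>.mp h
  convert (hasSum_ite_eq none (f none)).add h_some using 1
  funext i
  cases i <;> simp

theorem hasSum_sub_succ_of_antitone {f : ℕ → ℝ} (hf : Antitone f)
    (h : Tendsto f atTop (𝓝 0)) : HasSum (fun k => f k - f (k + 1)) (f 0) := by
  rw [hasSum_iff_tendsto_nat_of_nonneg (fun k => sub_nonneg.2 (hf k.le_succ))]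
  simp_rw [Finset.sum_range_sub']
  simpa using (tendsto_const_nhds (x := f 0)).sub h

theorem active_some_iff {j s : ℕ} : active (some j) s ↔ j ≤ s := by simp [active]

theorem not_active_none (s : ℕ) : ¬ active none s := by simp [active]

theorem active.mono {i : Option ℕ} {s t : ℕ} (h : active i s) (hst : s ≤ t) : active i t :=
  let ⟨j, hj, hjs⟩ := h
  ⟨j, hj, hjs.trans hst⟩

theorem w0_nonneg (i : Option ℕ) : 0 ≤ w0 i := by
  cases i <;> simp only [w0] <;> positivity

/-- The prior's tail telescopes: `1/(2(i+1)(i+2)) = 1/(2(i+1)) - 1/(2(i+2))`. -/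
theorem hasSum_w0_some_add (c : ℕ) :
    HasSum (fun k => w0 (some (k + c))) (1 / (2 * ((c : ℝ) + 1))) := by
  set f : ℕ → ℝ := fun k => 1 / (2 * (((k + c : ℕ) : ℝ) + 1)) with hf
  have hanti : Antitone f := antitone_nat_of_succ_le fun k => by
    simp only [hf]
    gcongr
    linarith
  have hlim : Tendsto f atTop (𝓝 0) := by
    have := (tendsto_one_div_add_atTop_nhds_zero_nat (𝕜 := ℝ)).comp
      (tendsto_add_atTop_nat c) |>.const_mul (1 / 2)
    rw [mul_zero] at this
    convert this using 2 with k
    simp only [hf, Function.comp]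
    field_simp
  convert hasSum_sub_succ_of_antitone hanti hlim using 1
  · funext k
    simp only [hf, w0]
    push_cast
    field_simp
    ring
  · simp [hf]

theorem lik_eq {i : Option ℕ} {n : ℕ} (hn : 100 < n) :
    lik i n = if active i 100 then 0 else 1 := by
  by_cases ha : active i 100
  · rw [lik, if_pos ha, if_neg]
    intro hall
    simpa [envRew, ha] using hall 100 hn
  · rw [lik, if_neg ha, if_pos]
    intro t _
    by_cases ht : t = 100
    · simp [envRew, ht, ha]
    · simp [envRew, ht]

theorem lik_some_of_le {n j : ℕ} (hn : 100 < n) (hj : j ≤ 100) : lik (some j) n = 0 := by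
  rw [lik_eq hn, if_pos (active_some_iff.2 hj)]

theorem lik_some_of_lt {n j : ℕ} (hn : 100 < n) (hj : 100 < j) : lik (some j) n = 1 := by
  rw [lik_eq hn, if_neg (mt active_some_iff.1 (by omega))]

theorem hasSum_w0_mul_lik_some {n : ℕ} (hn : 100 < n) :
    HasSum (fun j => w0 (some j) * lik (some j) n) (1 / 204) := by
  have htail : HasSum (fun k => w0 (some (k + 101)) * lik (some (k + 101)) n) (1 / 204) := by
    have hlik : ∀ k, lik (some (k + 101)) n = 1 := fun k => lik_some_of_lt hn (by omega)
    simp only [hlik, mul_one]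
    convert hasSum_w0_some_add 101 using 1
    norm_num
  have hhead : ∑ j ∈ Finset.range 101, w0 (some j) * lik (some j) n = 0 :=
    Finset.sum_eq_zero fun j hj => by
      rw [lik_some_of_le hn (Nat.lt_succ_iff.1 (Finset.mem_range.1 hj)), mul_zero]
  have h := (hasSum_nat_add_iff (f := fun j => w0 (some j) * lik (some j) n) 101).1 htail
  rwa [hhead, add_zero] at h

theorem tsum_w0_mul_lik {n : ℕ} (hn : 100 < n) : ∑' j, w0 j * lik j n = 103 / 204 := by
  rw [(hasSum_option (f := fun j => w0 j * lik j n) (hasSum_w0_mul_lik_some hn)).tsum_eq,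
    lik_eq hn, if_neg (not_active_none 100)]
  norm_num [w0]

theorem postw_eq {n : ℕ} (hn : 100 < n) (i : Option ℕ) :
    postw n i = 204 / 103 * (w0 i * lik i n) := by
  rw [postw, tsum_w0_mul_lik hn]
  ring

theorem postw_none {n : ℕ} (hn : 100 < n) : postw n none = 102 / 103 := by
  rw [postw_eq hn, lik_eq hn, if_neg (not_active_none 100)]
  norm_num [w0]

theorem postw_some_of_lt {n i : ℕ} (hn : 100 < n) (hi : 100 < i) :
    postw n (some i) = 204 / 103 * w0 (some i) := by
  rw [postw_eq hn, lik_eq hn, active_some_iff, if_neg (by omega), mul_one]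

theorem postw_eq_zero_of_active {n : ℕ} {i : Option ℕ} (hn : 100 < n) (hi : active i 100) :
    postw n i = 0 := by
  rw [postw_eq hn, lik_eq hn, if_pos hi, mul_zero, mul_zero]

theorem postw_nonneg {n : ℕ} (hn : 100 < n) (i : Option ℕ) : 0 ≤ postw n i := by
  rw [postw_eq hn, lik_eq hn]
  split_ifs <;> simp [w0_nonneg]

theorem hasSum_postw_some {n : ℕ} (hn : 100 < n) :
    HasSum (fun j => postw n (some j)) (1 / 103) := by
  have h := (hasSum_w0_mul_lik_some hn).mul_left (204 / 103)
  rw [show (204 / 103 : ℝ) * (1 / 204) = 1 / 103 by norm_num] at h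
  simpa only [postw_eq hn] using h

theorem hasSum_postw {n : ℕ} (hn : 100 < n) : HasSum (postw n) 1 := by
  convert hasSum_option (hasSum_postw_some hn) using 1
  rw [postw_none hn]
  norm_num

theorem rew_nonneg (S : Set ℕ) (i : Option ℕ) (t : ℕ) : 0 ≤ rew S i t := by
  unfold rew
  split_ifs <;> norm_num

theorem rew_le_one (S : Set ℕ) (i : Option ℕ) (t : ℕ) : rew S i t ≤ 1 := by
  unfold rew
  split_ifs <;> norm_num

theorem rew_eq_half {S : Set ℕ} {i : Option ℕ} {t : ℕ} (ht : t ∉ S)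
    (hi : ∀ s ∈ S, s < t → ¬ active i s) : rew S i t = 1 / 2 := by
  rw [rew, if_neg fun ⟨s, hs, hst, ha⟩ => hi s hs hst ha, if_neg ht]

theorem rew_none_of_mem {S : Set ℕ} {t : ℕ} (ht : t ∈ S) : rew S none t = 0 := by
  simp [rew, ht, not_active_none]

section Value

variable {γ : ℝ}

theorem summable_pow_mul_rew (hγ0 : 0 ≤ γ) (hγ1 : γ < 1) (S : Set ℕ) (i : Option ℕ)
    (n : ℕ) : Summable fun k => γ ^ k * rew S i (n + k) :=
  (summable_geometric_of_lt_one hγ0 hγ1).of_nonneg_of_le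
    (fun k => mul_nonneg (pow_nonneg hγ0 k) (rew_nonneg S i _))
    (fun k => mul_le_of_le_one_right (pow_nonneg hγ0 k) (rew_le_one S i _))

theorem valS_nonneg (hγ0 : 0 ≤ γ) (hγ1 : γ ≤ 1) (S : Set ℕ) (i : Option ℕ) (n : ℕ) :
    0 ≤ valS γ S i n :=
  mul_nonneg (sub_nonneg.2 hγ1)
    (tsum_nonneg fun k => mul_nonneg (pow_nonneg hγ0 k) (rew_nonneg S i _))

theorem valS_le_one (hγ0 : 0 ≤ γ) (hγ1 : γ < 1) (S : Set ℕ) (i : Option ℕ) (n : ℕ) :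
    valS γ S i n ≤ 1 := by
  have hle : ∑' k, γ ^ k * rew S i (n + k) ≤ ∑' k : ℕ, γ ^ k :=
    (summable_pow_mul_rew hγ0 hγ1 S i n).tsum_le_tsum
      (fun k => mul_le_of_le_one_right (pow_nonneg hγ0 k) (rew_le_one S i _))
      (summable_geometric_of_lt_one hγ0 hγ1)
  rw [tsum_geometric_of_lt_one hγ0 hγ1] at hle
  calc valS γ S i n ≤ (1 - γ) * (1 - γ)⁻¹ := mul_le_mul_of_nonneg_left hle (by linarith)
    _ = 1 := mul_inv_cancel₀ (by linarith)

theorem valS_eq_rew_add (hγ0 : 0 ≤ γ) (hγ1 : γ < 1) (S : Set ℕ) (i : Option ℕ) (n : ℕ) :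
    valS γ S i n = (1 - γ) * rew S i n + γ * valS γ S i (n + 1) := by
  have htail : ∑' k, γ ^ (k + 1) * rew S i (n + (k + 1))
      = γ * ∑' k, γ ^ k * rew S i (n + 1 + k) := by
    rw [← tsum_mul_left]
    refine tsum_congr fun k => ?_
    rw [show n + (k + 1) = n + 1 + k by omega, pow_succ]
    ring
  rw [valS, valS, (summable_pow_mul_rew hγ0 hγ1 S i n).tsum_eq_zero_add, htail, pow_zero,
    one_mul, add_zero]
  ring

theorem valS_of_forall_rew_eq (hγ0 : 0 ≤ γ) (hγ1 : γ < 1) {S : Set ℕ} {i : Option ℕ}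
    {n : ℕ} {c : ℝ} (h : ∀ k, rew S i (n + k) = c) : valS γ S i n = c := by
  simp only [valS, h, tsum_mul_right, tsum_geometric_of_lt_one hγ0 hγ1]
  field_simp [(by linarith : 1 - γ ≠ 0)]

theorem valS_of_forall_not_active (hγ0 : 0 ≤ γ) (hγ1 : γ < 1) {S : Set ℕ} {i : Option ℕ}
    {n : ℕ} (hS : ∀ s ∈ S, s < n) (hi : ∀ s ∈ S, ¬ active i s) : valS γ S i n = 1 / 2 :=
  valS_of_forall_rew_eq hγ0 hγ1 fun k =>
    rew_eq_half (fun hk => (hS _ hk).not_ge (Nat.le_add_right n k)) fun s hs _ => hi s hs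

theorem valS_union_singleton_none (hγ0 : 0 ≤ γ) (hγ1 : γ < 1) {S : Set ℕ} {n : ℕ}
    (hS : ∀ s ∈ S, s < n) :
    valS γ (S ∪ {n}) none n = γ / 2 := by
  have hpast : ∀ s ∈ S ∪ {n}, s < n + 1 := by
    rintro s (hs | hs)
    · exact (hS s hs).trans (Nat.lt_succ_self n)
    · exact Nat.lt_succ_of_le (le_of_eq hs)
  have hnext : valS γ (S ∪ {n}) none (n + 1) = 1 / 2 :=
    valS_of_forall_not_active hγ0 hγ1 hpast fun s _ => not_active_none s
  rw [valS_eq_rew_add hγ0 hγ1, rew_none_of_mem (Or.inr rfl), hnext]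
  ring

theorem tsum_postw_mul_valS_union_singleton_le (hγ0 : 0 ≤ γ) (hγ1 : γ < 1) {n : ℕ}
    (hn : 100 < n) {S : Set ℕ} (hS : ∀ s ∈ S, s < n) :
    ∑' i, postw n i * valS γ (S ∪ {n}) i n ≤ 102 / 103 * (γ / 2) + 1 / 103 := by
  set bound : Option ℕ → ℝ := fun i => i.elim (102 / 103 * (γ / 2)) fun j => postw n (some j)
  have hbound : HasSum bound (102 / 103 * (γ / 2) + 1 / 103) :=
    hasSum_option (f := bound) (hasSum_postw_some hn)
  have hle : ∀ i, postw n i * valS γ (S ∪ {n}) i n ≤ bound i := by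
    rintro (_ | j)
    · rw [postw_none hn, valS_union_singleton_none hγ0 hγ1 hS]
      rfl
    · exact mul_le_of_le_one_right (postw_nonneg hn _) (valS_le_one hγ0 hγ1 _ _ _)
  have hsummable : Summable fun i => postw n i * valS γ (S ∪ {n}) i n :=
    hbound.summable.of_nonneg_of_le
      (fun i => mul_nonneg (postw_nonneg hn i) (valS_nonneg hγ0 hγ1.le _ _ _)) hle
  exact hasSum_le hle hsummable.hasSum hbound

theorem tsum_postw_mul_valS_of_subset_Iic (hγ0 : 0 ≤ γ) (hγ1 : γ < 1) {n : ℕ}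
    (hn : 100 < n) {S : Set ℕ} (hS : S ⊆ Set.Iic 100) :
    ∑' i, postw n i * valS γ S i n = 1 / 2 := by
  have h : ∀ i, postw n i * valS γ S i n = postw n i * (1 / 2) := by
    intro i
    by_cases ha : active i 100
    · rw [postw_eq_zero_of_active hn ha, zero_mul, zero_mul]
    · rw [valS_of_forall_not_active hγ0 hγ1 (fun s hs => (hS hs).trans_lt hn)
        fun s hs has => ha (has.mono (hS hs))]
  rw [tsum_congr h, tsum_mul_right, (hasSum_postw hn).tsum_eq, one_mul]

end Value

theorem exploring_eventually_stops_general
    (n : ℕ) (hn : 100 < n) (S : Set ℕ)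
    (hcons : S ∩ Set.Iio n = {100}) (hpast : ∀ s ∈ S, s < n) :
    postw n none = 102 / 103 ∧
    (∀ i : ℕ, 100 < i →
      postw n (some i) = (204 / 103) * (1 / (2 * ((i : ℝ) + 1) * ((i : ℝ) + 2)))) ∧
    (∑' i : Option ℕ, postw n i * valS 0.9 (S ∪ {n}) i n)
      ≤ (102 / 103) * (0.5 * 0.9) + 1 / 103 ∧
    (102 / 103 : ℝ) * (0.5 * 0.9) + 1 / 103 < 0.5 ∧
    (∑' i : Option ℕ, postw n i * valS 0.9 S i n) = 0.5 := by
  have hS : S ⊆ Set.Iic 100 := fun s hs => by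
    have h : s ∈ S ∩ Set.Iio n := ⟨hs, hpast s hs⟩
    rw [hcons] at h
    exact le_of_eq h
  refine ⟨postw_none hn, fun i hi => postw_some_of_lt hn hi, ?_, by norm_num, ?_⟩
  · calc _ ≤ 102 / 103 * (0.9 / 2) + 1 / 103 :=
          tsum_postw_mul_valS_union_singleton_le (by norm_num) (by norm_num) hn hpast
      _ = _ := by norm_num
  · rw [tsum_postw_mul_valS_of_subset_Iic (by norm_num) (by norm_num) hn hS]
    norm_num

/-- **Bayes-optimal exploration eventually stops.** After a history `h_{<n}` (`n > 100`)
in which action 1 at `t = 100` yielded reward 0 (and action 0 was taken otherwise), the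
posterior is `w(ν_∞ | h_{<n}) = 102/103` and `w(ν_i | h_{<n}) = (204/103)·(1/(2(i+1)(i+2)))`
for `i > 100`, and for any `S ∋ 100` consistent with the history (and exploring no more),
exploring once more at time `n` is Bayes-worse than never exploring again:
`∑_i w(ν_i|h_{<n}) V^{π_{S∪{n}}}_{ν_i}(h_{<n}) ≤ (102/103)(0.5·0.9) + 1/103 < 0.5
 = ∑_i w(ν_i|h_{<n}) V^{π_S}_{ν_i}(h_{<n})`. -/
theorem exploring_eventually_stops
    (n : ℕ) (hn : 100 < n) (S : Set ℕ)
    (h100 : 100 ∈ S) (hcons : S ∩ Set.Iio n = {100}) (hpast : ∀ s ∈ S, s < n) :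
    postw n none = 102 / 103 ∧
    (∀ i : ℕ, 100 < i →
      postw n (some i) = (204 / 103) * (1 / (2 * ((i : ℝ) + 1) * ((i : ℝ) + 2)))) ∧
    (∑' i : Option ℕ, postw n i * valS 0.9 (S ∪ {n}) i n)
      ≤ (102 / 103) * (0.5 * 0.9) + 1 / 103 ∧
    (102 / 103 : ℝ) * (0.5 * 0.9) + 1 / 103 < 0.5 ∧
    (∑' i : Option ℕ, postw n i * valS 0.9 S i n) = 0.5 :=
  exploring_eventually_stops_general n hn S hcons hpast

end BayesExplore
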